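/- arXiv:2105.14414 — 3 statements merged into one kernel-verified Lean document; each statement's English description precedes it below -/
import Mathlib

section
/- Define I₃ : Λ³H → Hom_R(H, Λ²H) by I₃(v∧w∧u)(z) = ⟨z,w⟩ u∧v + ⟨z,u⟩ v∧w + ⟨z,v⟩ w∧u, and define Φ : H ⊗_R Λ²H → Hom_R(H, Λ²H) by Φ(x ⊗ η)(z) = ⟨z, x⟩ η. Then I₃ is a well-defined injective R-linear map, Φ is an R-linear isomorphism, and Hom_R(H, Λ²H) is the internal direct sum of the submodules I₃(Λ³H) and Φ(𝔱). -/
namespace Paper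

open ExteriorAlgebra

open scoped TensorProduct

variable {R : Type*} [CommRing R] {H : Type*} [AddCommGroup H] [Module R H]

theorem wedge_mem (v w : H) : ι R v * ι R w ∈ ⋀[R]^2 H := by
  rw [show (⋀[R]^2 H) = LinearMap.range (ι R (M := H)) * LinearMap.range (ι R (M := H)) from
    sq _]
  exact Submodule.mul_mem_mul (LinearMap.mem_range_self _ v) (LinearMap.mem_range_self _ w)

/-- The wedge product `H × H → Λ²H` as a bilinear map. -/
noncomputable def wedge : H →ₗ[R] H →ₗ[R] ↥(⋀[R]^2 H) :=
  LinearMap.mk₂ R (fun v w => ⟨ι R v * ι R w, wedge_mem v w⟩)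
    (fun v v' w => Subtype.ext (by simp [add_mul]))
    (fun c v w => Subtype.ext (by simp [smul_mul_assoc]))
    (fun v w w' => Subtype.ext (by simp [mul_add]))
    (fun c v w => Subtype.ext (by simp [mul_smul_comm]))

/-- The submodule `𝔱 ⊆ H ⊗ Λ²H` spanned by the elements `u⊗(v∧w) − v⊗(w∧u)`. -/
noncomputable def tSub (R : Type*) [CommRing R] (H : Type*) [AddCommGroup H] [Module R H] :
    Submodule R (H ⊗[R] ↥(⋀[R]^2 H)) :=
  Submodule.span R
    {x | ∃ u v w : H, x = u ⊗ₜ[R] (wedge v w) - v ⊗ₜ[R] (wedge w u)}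

/-- The symplectic form on `H` determined by a basis `e₁, …, e_{2g}`,
with `⟨e_{2i-1}, e_{2i}⟩ = 1 = −⟨e_{2i}, e_{2i-1}⟩`. -/
noncomputable def sympForm {g : ℕ} (e : Module.Basis (Fin (2 * g)) R H) : H →ₗ[R] H →ₗ[R] R :=
  ∑ i : Fin g,
    ((e.coord ⟨2 * i, by have := i.isLt; omega⟩).smulRight
        (e.coord ⟨2 * i + 1, by have := i.isLt; omega⟩) -
      (e.coord ⟨2 * i + 1, by have := i.isLt; omega⟩).smulRight
        (e.coord ⟨2 * i, by have := i.isLt; omega⟩))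


theorem wedge3_mem (v w u : H) : ι R v * ι R w * ι R u ∈ ⋀[R]^3 H := by
  rw [show (⋀[R]^3 H) = (LinearMap.range (ι R (M := H))) ^ 2 * LinearMap.range (ι R (M := H))
    from pow_succ _ 2]
  exact Submodule.mul_mem_mul (wedge_mem v w) (LinearMap.mem_range_self _ u)

/-- The wedge product `v ∧ w ∧ u ∈ Λ³H` of three vectors. -/
noncomputable def wedge3 (v w u : H) : ↥(⋀[R]^3 H) :=
  ⟨ι R v * ι R w * ι R u, wedge3_mem v w u⟩

/-!
The form `⟨·,·⟩` is perfect: `⟨·, e_{2i}⟩ = e_{2i-1}^*` and `⟨·, e_{2i-1}⟩ = -e_{2i}^*`, so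
`x ↦ ⟨·, x⟩` identifies `H` with its dual, and `Φ` is the canonical isomorphism
`H^* ⊗ Λ²H ≅ Hom(H, Λ²H)` precomposed with this identification. Moreover `I₃ = Φ ∘ T` for
`T(v∧w∧u) = w⊗(u∧v) + u⊗(v∧w) + v⊗(w∧u)`. The multiplication `μ : H ⊗ Λ²H → Λ³H` satisfies
`μ ∘ T = 3`, and `3 • x⊗(v∧w) ≡ T(x∧v∧w)` modulo `𝔱`. Once `3` is invertible, `T` is therefore
injective, `𝔱 = ker μ` and `H ⊗ Λ²H = T(Λ³H) ⊕ 𝔱`; `Φ` carries this to the claimed decomposition.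
-/

section ScaledRetraction

variable {M N : Type*} [AddCommGroup M] [Module R M] [AddCommGroup N] [Module R N]
  {s : N →ₗ[R] M} {p : M →ₗ[R] N} {u : R}

lemma injective_of_comp_eq_smul_id (hu : IsUnit u) (h : p ∘ₗ s = u • LinearMap.id) :
    Function.Injective s := by
  intro x y hxy
  have hps (x : N) : p (s x) = u • x := by simpa using LinearMap.congr_fun h x
  rw [← hu.smul_left_cancel, ← hps, ← hps, hxy]

lemma isCompl_range_ker_of_comp_eq_smul_id (hu : IsUnit u)
    (h : p ∘ₗ s = u • LinearMap.id) : IsCompl (LinearMap.range s) (LinearMap.ker p) := by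
  have hps (x : N) : p (s x) = u • x := by simpa using LinearMap.congr_fun h x
  obtain ⟨c, hc⟩ := hu.exists_left_inv
  constructor
  · rw [Submodule.disjoint_def]
    rintro _ ⟨x, rfl⟩ hx
    rw [LinearMap.mem_ker, hps, ← smul_zero u, hu.smul_left_cancel] at hx
    rw [hx, map_zero]
  · rw [Submodule.codisjoint_iff_exists_add_eq]
    intro m
    refine ⟨s (c • p m), m - s (c • p m), LinearMap.mem_range_self _ _, ?_, add_sub_cancel _ _⟩
    rw [LinearMap.mem_ker, map_sub, hps, smul_smul, mul_comm, hc, one_smul, sub_self]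

end ScaledRetraction

lemma bijective_of_coord_mem_range {M ι : Type*} [AddCommGroup M] [Module R M]
    [Finite ι] (b : Module.Basis ι R M) {f : M →ₗ[R] Module.Dual R M}
    (h : ∀ k, b.coord k ∈ LinearMap.range f) : Function.Bijective f := by
  classical
  have : Module.Finite R (Module.Dual R M) := Module.Finite.of_basis b.dualBasis
  refine OrzechProperty.bijective_of_surjective_of_injective b.toDual f b.toDual_injective ?_
  rw [← LinearMap.range_eq_top, eq_top_iff, ← b.dualBasis.span_eq, Submodule.span_le,
    Set.range_subset_iff, b.coe_dualBasis]
  exact h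

lemma wedge_self (v : H) : wedge (R := R) v v = 0 :=
  Subtype.ext (ι_sq_zero v)

lemma wedge_add_wedge_swap (v w : H) : wedge (R := R) v w + wedge w v = 0 :=
  Subtype.ext (ι_add_mul_swap v w)

lemma wedge_swap (v w : H) : wedge (R := R) w v = -wedge v w :=
  eq_neg_of_add_eq_zero_left (wedge_add_wedge_swap w v)

lemma ιMulti_two (v : Fin 2 → H) : exteriorPower.ιMulti R 2 v = wedge (v 0) (v 1) :=
  Subtype.ext (by simp [wedge, ιMulti_apply, Matrix.vecTail])

lemma ιMulti_three (v : Fin 3 → H) :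
    exteriorPower.ιMulti R 3 v = wedge3 (v 0) (v 1) (v 2) :=
  Subtype.ext (by simp [wedge3, ιMulti_apply, mul_assoc, Matrix.vecTail])

lemma wedge3_eq_ιMulti (v w u : H) :
    wedge3 (R := R) v w u = exteriorPower.ιMulti R 3 ![v, w, u] :=
  (ιMulti_three ![v, w, u]).symm

lemma wedge3_rotate (v w u : H) : wedge3 (R := R) u v w = wedge3 v w u := by
  have hrot : ![u, v, w] = ![v, w, u] ∘ (finRotate 3).symm := by
    ext i; fin_cases i <;> rfl
  rw [wedge3_eq_ιMulti, wedge3_eq_ιMulti, hrot, AlternatingMap.map_perm]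
  simp [sign_finRotate]

lemma ι_mul_mem_exteriorPower_succ {n : ℕ} (x : H) {η : ExteriorAlgebra R H}
    (hη : η ∈ ⋀[R]^n H) : ι R x * η ∈ ⋀[R]^(n + 1) H := by
  rw [exteriorPower, pow_succ']
  exact Submodule.mul_mem_mul (LinearMap.mem_range_self _ x) hη

variable (R H) in
noncomputable def wedgeMul : H ⊗[R] ⋀[R]^2 H →ₗ[R] ⋀[R]^3 H :=
  TensorProduct.lift <| LinearMap.codRestrict₂
    ((LinearMap.mul R (ExteriorAlgebra R H)).compl₁₂ (ι R) (⋀[R]^2 H).subtype)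
    (⋀[R]^3 H).subtype (⋀[R]^3 H).injective_subtype fun x η => by
      simpa using ι_mul_mem_exteriorPower_succ x η.2

lemma wedgeMul_tmul_wedge (x v w : H) : wedgeMul R H (x ⊗ₜ wedge v w) = wedge3 x v w := by
  refine Subtype.ext ?_
  rw [wedgeMul, TensorProduct.lift.tmul]
  exact (LinearMap.codRestrict₂_apply _ (⋀[R]^3 H).subtype _ _ x (wedge v w)).trans
    (mul_assoc (ι R x) (ι R v) (ι R w)).symm

variable (R H) in
noncomputable def cyclicWedgeTensor : H [⋀^Fin 3]→ₗ[R] H ⊗[R] ⋀[R]^2 H where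
  toFun v := v 1 ⊗ₜ wedge (v 2) (v 0) + v 2 ⊗ₜ wedge (v 0) (v 1) + v 0 ⊗ₜ wedge (v 1) (v 2)
  map_update_add' v i x y := by
    fin_cases i <;>
      simp [Function.update, Fin.ext_iff, TensorProduct.add_tmul, TensorProduct.tmul_add] <;> abel
  map_update_smul' v i c x := by
    fin_cases i <;>
      simp [Function.update, Fin.ext_iff, TensorProduct.smul_tmul', TensorProduct.tmul_smul,
        smul_add]
  map_eq_zero_of_eq' v i j hv hij := by
    fin_cases i <;> fin_cases j <;>
      simp_all [wedge_self, ← TensorProduct.tmul_add, wedge_add_wedge_swap]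

variable (R H) in
noncomputable def wedgeComul : ⋀[R]^3 H →ₗ[R] H ⊗[R] ⋀[R]^2 H :=
  exteriorPower.alternatingMapLinearEquiv (cyclicWedgeTensor R H)

lemma wedgeComul_wedge3 (v w u : H) :
    wedgeComul R H (wedge3 v w u) = w ⊗ₜ wedge u v + u ⊗ₜ wedge v w + v ⊗ₜ wedge w u := by
  rw [wedge3_eq_ιMulti, wedgeComul, exteriorPower.alternatingMapLinearEquiv_apply_ιMulti]
  rfl

lemma wedgeMul_comp_wedgeComul : wedgeMul R H ∘ₗ wedgeComul R H = (3 : R) • LinearMap.id := by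
  ext v : 2
  simp only [LinearMap.compAlternatingMap_apply, LinearMap.comp_apply, LinearMap.smul_apply,
    LinearMap.id_apply, ιMulti_three, wedgeComul_wedge3, map_add, wedgeMul_tmul_wedge]
  rw [wedge3_rotate (v 2) (v 0) (v 1), wedge3_rotate (v 0) (v 1) (v 2)]
  module

lemma tSub_le_ker_wedgeMul : tSub R H ≤ LinearMap.ker (wedgeMul R H) := by
  rw [tSub, Submodule.span_le]
  rintro _ ⟨u, v, w, rfl⟩
  rw [SetLike.mem_coe, LinearMap.mem_ker, map_sub, wedgeMul_tmul_wedge, wedgeMul_tmul_wedge,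
    wedge3_rotate, sub_self]

lemma three_smul_tmul_wedge_sub_mem_tSub (x v w : H) :
    (3 : R) • x ⊗ₜ wedge v w - wedgeComul R H (wedgeMul R H (x ⊗ₜ wedge v w)) ∈ tSub R H := by
  have hxvw : x ⊗ₜ wedge v w - v ⊗ₜ wedge w x ∈ tSub R H := Submodule.subset_span ⟨x, v, w, rfl⟩
  have hxwv : x ⊗ₜ wedge w v - w ⊗ₜ wedge v x ∈ tSub R H := Submodule.subset_span ⟨x, w, v, rfl⟩
  convert sub_mem hxvw hxwv using 1
  rw [wedgeMul_tmul_wedge, wedgeComul_wedge3, wedge_swap w v, wedge_swap v x,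
    TensorProduct.tmul_neg, TensorProduct.tmul_neg]
  module

lemma range_three_smul_sub_wedgeComul_comp_wedgeMul_le_tSub :
    LinearMap.range ((3 : R) • LinearMap.id - wedgeComul R H ∘ₗ wedgeMul R H) ≤ tSub R H := by
  rw [← Submodule.ker_mkQ (tSub R H), LinearMap.range_le_ker_iff]
  ext x v
  simpa [ιMulti_two (R := R)] using (Submodule.Quotient.mk_eq_zero (tSub R H)).mpr
    (three_smul_tmul_wedge_sub_mem_tSub x (v 0) (v 1))

lemma ker_wedgeMul (h3 : IsUnit (3 : R)) : LinearMap.ker (wedgeMul R H) = tSub R H := by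
  refine le_antisymm (fun m hm => ?_) tSub_le_ker_wedgeMul
  rw [← Submodule.smul_mem_iff_of_isUnit _ h3]
  have hm' := range_three_smul_sub_wedgeComul_comp_wedgeMul_le_tSub (R := R) (H := H)
    (LinearMap.mem_range_self _ m)
  rw [LinearMap.mem_ker] at hm
  simpa [hm] using hm'

lemma isCompl_range_wedgeComul_tSub (h3 : IsUnit (3 : R)) :
    IsCompl (LinearMap.range (wedgeComul R H)) (tSub R H) := by
  rw [← ker_wedgeMul h3]
  exact isCompl_range_ker_of_comp_eq_smul_id h3 wedgeMul_comp_wedgeComul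

lemma wedgeComul_injective (h3 : IsUnit (3 : R)) : Function.Injective (wedgeComul R H) :=
  injective_of_comp_eq_smul_id h3 wedgeMul_comp_wedgeComul

section Symplectic

variable {g : ℕ}

-- `pairIndex (i, b) = 2 * i + b` indexes the paper's `e_{2i+b+1}`, since `Fin` counts from `0`.
def pairIndex : Fin g × Fin 2 ≃ Fin (2 * g) :=
  finProdFinEquiv.trans (finCongr (Nat.mul_comm g 2))

lemma sympForm_apply (e : Module.Basis (Fin (2 * g)) R H) (z x : H) :
    sympForm e z x = ∑ i, (e.coord (pairIndex (i, 0)) z * e.coord (pairIndex (i, 1)) x -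
      e.coord (pairIndex (i, 1)) z * e.coord (pairIndex (i, 0)) x) := by
  have h0 (i : Fin g) : pairIndex (i, 0) = ⟨2 * i, by omega⟩ := Fin.ext (by simp [pairIndex])
  have h1 (i : Fin g) : pairIndex (i, 1) = ⟨2 * i + 1, by omega⟩ :=
    Fin.ext (by simp [pairIndex]; ring)
  simp [sympForm, h0, h1, LinearMap.sum_apply]

lemma sympForm_apply_basis_snd (e : Module.Basis (Fin (2 * g)) R H) (z : H) (i : Fin g) :
    sympForm e z (e (pairIndex (i, 1))) = e.coord (pairIndex (i, 0)) z := by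
  simp [sympForm_apply, Finsupp.single_apply]

lemma sympForm_apply_basis_fst (e : Module.Basis (Fin (2 * g)) R H) (z : H) (i : Fin g) :
    sympForm e z (e (pairIndex (i, 0))) = -e.coord (pairIndex (i, 1)) z := by
  simp [sympForm_apply, Finsupp.single_apply]

lemma sympForm_flip_bijective (e : Module.Basis (Fin (2 * g)) R H) :
    Function.Bijective (sympForm e).flip := by
  refine bijective_of_coord_mem_range e fun k => ?_
  obtain ⟨⟨i, b⟩, rfl⟩ := pairIndex.surjective k
  fin_cases b
  · exact ⟨e (pairIndex (i, 1)), LinearMap.ext fun z => by simp [sympForm_apply_basis_snd]⟩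
  · exact ⟨-e (pairIndex (i, 0)), LinearMap.ext fun z => by simp [sympForm_apply_basis_fst]⟩

noncomputable def sympTensorEquiv (e : Module.Basis (Fin (2 * g)) R H) (N : Type*)
    [AddCommGroup N] [Module R N] : H ⊗[R] N ≃ₗ[R] (H →ₗ[R] N) :=
  (TensorProduct.congr (LinearEquiv.ofBijective _ (sympForm_flip_bijective e))
    (LinearEquiv.refl R N)).trans (dualTensorHomEquivOfBasis e)

lemma sympTensorEquiv_tmul_apply (e : Module.Basis (Fin (2 * g)) R H) {N : Type*}
    [AddCommGroup N] [Module R N] (x : H) (η : N) (z : H) :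
    sympTensorEquiv e N (x ⊗ₜ η) z = sympForm e z x • η :=
  rfl

end Symplectic

theorem stmt6_general (P : Ideal ℤ) [P.IsPrime] (hP3 : (3 : ℤ) ∉ P)
    {R : Type*} [CommRing R] [Algebra ℤ R] [IsLocalization.AtPrime R P]
    {H : Type*} [AddCommGroup H] [Module R H] {g : ℕ}
    (e : Module.Basis (Fin (2 * g)) R H) :
    ∃ (I₃ : ↥(⋀[R]^3 H) →ₗ[R] (H →ₗ[R] ↥(⋀[R]^2 H)))
      (Φ : (H ⊗[R] ↥(⋀[R]^2 H)) →ₗ[R] (H →ₗ[R] ↥(⋀[R]^2 H))),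
      (∀ v w u z : H,
        I₃ (wedge3 v w u) z =
          sympForm e z w • wedge (R := R) u v + sympForm e z u • wedge (R := R) v w +
            sympForm e z v • wedge (R := R) w u) ∧
      Function.Injective I₃ ∧
      (∀ (x : H) (η : ↥(⋀[R]^2 H)) (z : H), Φ (x ⊗ₜ[R] η) z = sympForm e z x • η) ∧
      Function.Bijective Φ ∧
      IsCompl (LinearMap.range I₃) ((tSub R H).map Φ) := by
  have h3 : IsUnit (3 : R) := by
    simpa using IsLocalization.map_units (M := P.primeCompl) R ⟨3, hP3⟩
  let Φ := sympTensorEquiv e (⋀[R]^2 H)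
  refine ⟨Φ ∘ₗ wedgeComul R H, Φ, fun v w u z => ?_, Φ.injective.comp (wedgeComul_injective h3),
    sympTensorEquiv_tmul_apply e, Φ.bijective, ?_⟩
  · simp [Φ, wedgeComul_wedge3, sympTensorEquiv_tmul_apply]
  · rw [LinearMap.range_comp]
    exact (Submodule.orderIsoMapComap Φ).isCompl (isCompl_range_wedgeComul_tSub h3)

/-- The maps `I₃ : Λ³H → Hom(H, Λ²H)`,
`I₃(v∧w∧u)(z) = ⟨z,w⟩ u∧v + ⟨z,u⟩ v∧w + ⟨z,v⟩ w∧u`, and `Φ : H ⊗ Λ²H → Hom(H, Λ²H)`,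
`Φ(x ⊗ η)(z) = ⟨z,x⟩ η`, are well defined and `R`-linear; `I₃` is injective, `Φ` is an
isomorphism, and `Hom(H, Λ²H)` is the internal direct sum of `I₃(Λ³H)` and `Φ(𝔱)`. -/
theorem stmt6 (P : Ideal ℤ) [P.IsPrime] (hP2 : (2 : ℤ) ∉ P) (hP3 : (3 : ℤ) ∉ P)
    {R : Type*} [CommRing R] [Algebra ℤ R] [IsLocalization.AtPrime R P]
    {H : Type*} [AddCommGroup H] [Module R H] {g : ℕ} (hg : 1 ≤ g)
    (e : Module.Basis (Fin (2 * g)) R H) :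
    ∃ (I₃ : ↥(⋀[R]^3 H) →ₗ[R] (H →ₗ[R] ↥(⋀[R]^2 H)))
      (Φ : (H ⊗[R] ↥(⋀[R]^2 H)) →ₗ[R] (H →ₗ[R] ↥(⋀[R]^2 H))),
      (∀ v w u z : H,
        I₃ (wedge3 v w u) z =
          sympForm e z w • wedge (R := R) u v + sympForm e z u • wedge (R := R) v w +
            sympForm e z v • wedge (R := R) w u) ∧
      Function.Injective I₃ ∧
      (∀ (x : H) (η : ↥(⋀[R]^2 H)) (z : H), Φ (x ⊗ₜ[R] η) z = sympForm e z x • η) ∧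
      Function.Bijective Φ ∧
      IsCompl (LinearMap.range I₃) ((tSub R H).map Φ) :=
  stmt6_general P hP3 e

end Paper
end

section
/- Let V be a vector space over ℚ, let k ≥ 2, and let C(k) denote the quotient of the k-fold tensor power V^{⊗k} by the subspace spanned by all elements a₁⊗a₂⊗⋯⊗a_k − a₂⊗⋯⊗a_k⊗a₁ with aᵢ ∈ V. Then for all v₁, …, v_k ∈ V, the image of the iterated bracket ι(v₁, …, v_k) in C(k) is zero. -/
/-- The iterated bracket `ι(v, w₁, …, w_m)` in the tensor algebra, defined by
`ι(v) = v` and `ι(v, rest) = v ⊗ ι(rest) − ι(rest) ⊗ v` (commutator bracket). -/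
noncomputable def iterBr {V : Type*} [AddCommGroup V] [Module ℚ V] :
    V → List V → TensorAlgebra ℚ V
  | v, [] => TensorAlgebra.ι ℚ v
  | v, w :: l => TensorAlgebra.ι ℚ v * iterBr w l - iterBr w l * TensorAlgebra.ι ℚ v

/-- The commutator with `ι v` as a linear map. -/
noncomputable def commBr {V : Type*} [AddCommGroup V] [Module ℚ V] (v : V) :
    TensorAlgebra ℚ V →ₗ[ℚ] TensorAlgebra ℚ V :=
  LinearMap.mulLeft ℚ (TensorAlgebra.ι ℚ v) - LinearMap.mulRight ℚ (TensorAlgebra.ι ℚ v)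

lemma iterBr_mem_span_words {V : Type*} [AddCommGroup V] [Module ℚ V]
    (v : V) (l : List V) :
    iterBr v l ∈ Submodule.span ℚ {x : TensorAlgebra ℚ V |
      ∃ m : List V, m.length = l.length + 1 ∧
        x = (m.map fun a => TensorAlgebra.ι ℚ a).prod} := by
  induction l generalizing v with
  | nil => exact Submodule.subset_span ⟨[v], rfl, by simp [iterBr]⟩
  | cons w l ih =>
    have hB := ih w
    have hmap : Submodule.map (commBr v)
        (Submodule.span ℚ {x : TensorAlgebra ℚ V |
          ∃ m : List V, m.length = l.length + 1 ∧
            x = (m.map fun a => TensorAlgebra.ι ℚ a).prod}) ≤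
        Submodule.span ℚ {x : TensorAlgebra ℚ V |
          ∃ m : List V, m.length = (w :: l).length + 1 ∧
            x = (m.map fun a => TensorAlgebra.ι ℚ a).prod} := by
      rw [Submodule.map_span, Submodule.span_le]
      rintro _ ⟨x, ⟨m, hm, rfl⟩, rfl⟩
      have h1 : (commBr v) ((m.map fun a => TensorAlgebra.ι ℚ a).prod) =
          ((v :: m).map fun a => TensorAlgebra.ι ℚ a).prod -
          ((m ++ [v]).map fun a => TensorAlgebra.ι ℚ a).prod := by
        simp [commBr, LinearMap.sub_apply, LinearMap.mulLeft_apply,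
          LinearMap.mulRight_apply]
      rw [h1]
      have h2 : ((v :: m).map fun a => TensorAlgebra.ι ℚ a).prod ∈
          Submodule.span ℚ {x : TensorAlgebra ℚ V |
            ∃ m : List V, m.length = (w :: l).length + 1 ∧
              x = (m.map fun a => TensorAlgebra.ι ℚ a).prod} :=
        Submodule.subset_span ⟨v :: m, by simp [hm], rfl⟩
      have h3 : ((m ++ [v]).map fun a => TensorAlgebra.ι ℚ a).prod ∈
          Submodule.span ℚ {x : TensorAlgebra ℚ V |
            ∃ m : List V, m.length = (w :: l).length + 1 ∧
              x = (m.map fun a => TensorAlgebra.ι ℚ a).prod} :=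
        Submodule.subset_span ⟨m ++ [v], by simp [hm], rfl⟩
      exact sub_mem h2 h3
    have : (commBr v) (iterBr w l) ∈ _ := hmap ⟨iterBr w l, hB, rfl⟩
    simpa [commBr, iterBr, LinearMap.sub_apply, LinearMap.mulLeft_apply,
      LinearMap.mulRight_apply] using this

/-- For a ℚ-vector space `V` and `k ≥ 2`, the image in the cyclic quotient
`C(k)` of any iterated bracket `ι(v₁, …, v_k)` is zero; equivalently, `ι(v₁, …, v_k)` lies in
the span of the elements `a₁⊗⋯⊗a_k − a₂⊗⋯⊗a_k⊗a₁`. -/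
theorem stmt15 {V : Type*} [AddCommGroup V] [Module ℚ V] (k : ℕ) (hk : 2 ≤ k)
    (v : V) (l : List V) (hl : l.length + 1 = k) :
    iterBr v l ∈ Submodule.span ℚ {x : TensorAlgebra ℚ V |
      ∃ m : List V, m.length = k ∧
        x = (m.map fun a => TensorAlgebra.ι ℚ a).prod -
          ((m.rotate 1).map fun a => TensorAlgebra.ι ℚ a).prod} := by
  subst hl
  cases l with
  | nil => simp at hk
  | cons w l =>
    have hB := iterBr_mem_span_words w l
    have hmap : Submodule.map (commBr v)
        (Submodule.span ℚ {x : TensorAlgebra ℚ V |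
          ∃ m : List V, m.length = l.length + 1 ∧
            x = (m.map fun a => TensorAlgebra.ι ℚ a).prod}) ≤
        Submodule.span ℚ {x : TensorAlgebra ℚ V |
          ∃ m : List V, m.length = (w :: l).length + 1 ∧
            x = (m.map fun a => TensorAlgebra.ι ℚ a).prod -
              ((m.rotate 1).map fun a => TensorAlgebra.ι ℚ a).prod} := by
      rw [Submodule.map_span, Submodule.span_le]
      rintro _ ⟨x, ⟨m, hm, rfl⟩, rfl⟩
      refine Submodule.subset_span ⟨v :: m, by simp [hm], ?_⟩
      have hrot : (v :: m).rotate 1 = m ++ [v] := by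
        simpa using List.rotate_cons_succ m v 0
      rw [hrot]
      simp [commBr, LinearMap.sub_apply, LinearMap.mulLeft_apply,
        LinearMap.mulRight_apply]
    have : (commBr v) (iterBr w l) ∈ _ := hmap ⟨iterBr w l, hB, rfl⟩
    simpa [commBr, iterBr, LinearMap.sub_apply, LinearMap.mulLeft_apply,
      LinearMap.mulRight_apply] using this
end

section
/- Let V be a finite-dimensional ℚ-vector space with basis e₁, …, e_n and dual basis e₁*, …, e_n*. For a linear functional ξ ∈ V*, let Φ_ξ : V^{⊗(k+1)} → V^{⊗k} be the contraction with respect to the first tensor factor, determined by Φ_ξ(x₁⊗x₂⊗⋯⊗x_{k+1}) = ξ(x₁)·x₂⊗⋯⊗x_{k+1}. Then for every k ≥ 2 and all v₁, …, v_k ∈ V, setting B = ι(v₁, …, v_k) ∈ V^{⊗k}, the element Σ_{i=1}^{n} Φ_{eᵢ*}( eᵢ ⊗ B − B ⊗ eᵢ ) of V^{⊗k} has image zero in the cyclic quotient C(k). (Equivalently, the Enomoto–Satoh trace Tr^{ES}_k vanishes on the image of the map λ_k : b ↦ Σᵢ eᵢ* ⊗ [eᵢ, b].) -/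
namespace Stmt16

/-- Coordinate model of `V ⊗ V^{⊗k} → V^{⊗(k+1)}`, `v ⊗ x ↦ v ⊗ x` (left concatenation),
where `V = Fin n → ℚ` and `V^{⊗k}` is modelled as `(Fin k → Fin n) → ℚ` via the standard
basis. -/
def lcons {n k : ℕ} (v : Fin n → ℚ) (x : (Fin k → Fin n) → ℚ) :
    (Fin (k + 1) → Fin n) → ℚ :=
  fun φ => v (φ 0) * x fun i => φ i.succ

/-- Right concatenation `x ⊗ v`. -/
def rcons {n k : ℕ} (x : (Fin k → Fin n) → ℚ) (v : Fin n → ℚ) :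
    (Fin (k + 1) → Fin n) → ℚ :=
  fun φ => x (fun i => φ i.castSucc) * v (φ (Fin.last k))

/-- The pure tensor `a₁ ⊗ ⋯ ⊗ a_k` in coordinates. -/
def tp {n k : ℕ} (a : Fin k → (Fin n → ℚ)) : (Fin k → Fin n) → ℚ :=
  fun φ => ∏ i, a i (φ i)

/-- The iterated bracket `ι(v₀, …, v_m) ∈ V^{⊗(m+1)}`:
`ι(v) = v` and `ι(v₀, rest) = v₀ ⊗ ι(rest) − ι(rest) ⊗ v₀`. -/
def ib {n : ℕ} : (m : ℕ) → (Fin (m + 1) → (Fin n → ℚ)) → ((Fin (m + 1) → Fin n) → ℚ)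
  | 0, v => fun φ => v 0 (φ 0)
  | m + 1, v =>
      lcons (v 0) (ib m fun i => v i.succ) - rcons (ib m fun i => v i.succ) (v 0)

/-- Contraction `Φ_{eᵢ*} : V^{⊗(k+1)} → V^{⊗k}` with respect to the first tensor factor,
against the dual basis vector `eᵢ*`. -/
def contr {n k : ℕ} (i : Fin n) (x : (Fin (k + 1) → Fin n) → ℚ) :
    (Fin k → Fin n) → ℚ :=
  fun φ => x (Fin.cons i φ)



-- aux begins here (docstring above belongs to theorem below; reattached)

def sig {n k : ℕ} : ((Fin (k + 1) → Fin n) → ℚ) →ₗ[ℚ] ((Fin (k + 1) → Fin n) → ℚ) where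
  toFun x := fun φ => x (Fin.cons (φ (Fin.last k)) fun j => φ j.castSucc)
  map_add' _ _ := rfl
  map_smul' _ _ := rfl

@[simp] lemma sig_apply {n k : ℕ} (x : (Fin (k+1) → Fin n) → ℚ) (φ : Fin (k+1) → Fin n) :
    sig x φ = x (Fin.cons (φ (Fin.last k)) fun j => φ j.castSucc) := rfl

lemma sig_tp {n k : ℕ} (a : Fin (k+1) → (Fin n → ℚ)) :
    sig (tp a) = tp fun j => a (j + 1) := by
  funext φ
  simp only [sig_apply, tp]
  rw [Fin.prod_univ_succ, Fin.prod_univ_castSucc, mul_comm]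
  simp [Fin.cons_zero, Fin.cons_succ, Fin.last_add_one, Fin.coeSucc_eq_succ]

lemma sig_lcons {n k : ℕ} (w : Fin n → ℚ) (x : (Fin k → Fin n) → ℚ) :
    sig (lcons w x) = rcons x w := by
  funext φ
  simp [sig_apply, lcons, rcons, Fin.cons_zero, Fin.cons_succ, mul_comm]

lemma tp_single_apply {n k : ℕ} (ψ φ : Fin k → Fin n) :
    tp (fun j => Pi.single (ψ j) (1:ℚ)) φ = if φ = ψ then 1 else 0 := by
  simp only [tp, Pi.single_apply]
  by_cases h : φ = ψ
  · simp [h]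
  · obtain ⟨j, hj⟩ := Function.ne_iff.mp h
    rw [if_neg h]
    exact Finset.prod_eq_zero (Finset.mem_univ j) (by simp [hj])

lemma eq_sum_tp {n k : ℕ} (x : (Fin k → Fin n) → ℚ) :
    x = ∑ ψ : Fin k → Fin n, x ψ • tp (fun j => Pi.single (ψ j) (1:ℚ)) := by
  funext φ
  rw [Finset.sum_apply]
  simp [tp_single_apply, Finset.sum_ite_eq]

lemma sub_sig_mem {n k : ℕ} (x : (Fin (k+1) → Fin n) → ℚ) :
    x - sig x ∈ Submodule.span ℚ {y : (Fin (k + 1) → Fin n) → ℚ |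
        ∃ a : Fin (k + 1) → (Fin n → ℚ), y = tp a - tp fun j => a (j + 1)} := by
  rw [eq_sum_tp x, map_sum, ← Finset.sum_sub_distrib]
  refine Submodule.sum_mem _ fun ψ _ => ?_
  rw [map_smul, ← smul_sub]
  refine Submodule.smul_mem _ _ (Submodule.subset_span ?_)
  exact ⟨fun j => Pi.single (ψ j) 1, by rw [sig_tp]⟩

lemma cons_comp_castSucc {α : Type*} {k : ℕ} (i : α) (φ : Fin (k+1) → α) :
    (fun j : Fin (k+1) => Fin.cons (α := fun _ => α) i φ (Fin.castSucc j)) =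
      Fin.cons (α := fun _ => α) i fun j : Fin k => φ j.castSucc := by
  funext j
  refine Fin.cases ?_ (fun j' => ?_) j
  · simp
  · simp [← Fin.succ_castSucc]

lemma sum_eq {n m : ℕ} (v : Fin (m + 1) → (Fin n → ℚ)) :
    (∑ i : Fin n,
        (contr i (lcons (Pi.single i 1) (ib m v)) - contr i (rcons (ib m v) (Pi.single i 1)))) =
      (n : ℚ) • ib m v - sig (ib m v) := by
  funext φ
  rw [Finset.sum_apply]
  simp only [Pi.sub_apply, contr, lcons, rcons, Fin.cons_zero, Fin.cons_succ,
    Pi.single_eq_same, one_mul, ← Fin.succ_last, cons_comp_castSucc, Pi.single_apply]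
  simp [Finset.sum_sub_distrib, mul_ite, Finset.sum_ite_eq, Fin.succ_last]

/-- For `B = ι(v₁, …, v_k)` (`k ≥ 2`), the element
`Σᵢ Φ_{eᵢ*}(eᵢ ⊗ B − B ⊗ eᵢ)` of `V^{⊗k}` has image zero in the cyclic quotient `C(k)`,
i.e. it lies in the span of the elements `a₁⊗⋯⊗a_k − a₂⊗⋯⊗a_k⊗a₁`.  (Equivalently, the
Enomoto–Satoh trace vanishes on the image of `λ_k : b ↦ Σᵢ eᵢ* ⊗ [eᵢ, b]`.) -/
theorem stmt16 (n : ℕ) (m : ℕ) (hm : 1 ≤ m) (v : Fin (m + 1) → (Fin n → ℚ)) :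
    (∑ i : Fin n,
        (contr i (lcons (Pi.single i 1) (ib m v)) - contr i (rcons (ib m v) (Pi.single i 1)))) ∈
      Submodule.span ℚ {x : (Fin (m + 1) → Fin n) → ℚ |
        ∃ a : Fin (m + 1) → (Fin n → ℚ), x = tp a - tp fun j => a (j + 1)} := by
  rw [sum_eq]
  obtain ⟨m, rfl⟩ : ∃ m', m = m' + 1 := ⟨m - 1, (Nat.succ_pred_eq_of_pos hm).symm⟩
  have hB : ib (m + 1) v = lcons (v 0) (ib m fun i => v i.succ)
      - sig (lcons (v 0) (ib m fun i => v i.succ)) := by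
    rw [sig_lcons]; rfl
  set L := lcons (v 0) (ib m fun i => v i.succ) with hL
  rw [hB, map_sub]
  have h1 := sub_sig_mem L
  have h2 := sub_sig_mem (sig L)
  exact Submodule.sub_mem _ (Submodule.smul_mem _ _ h1) h2

end Stmt16
end
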